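/- Let P be a symmetric n×n real matrix and Q a m×n real matrix. Suppose xᵀPx < 0 for every nonzero x ∈ ℝⁿ with Qx = 0. Then there exists c* > 0 such that for all c > c*, the matrix P − c·QᵀQ is negative definite. -/

import Mathlib

/-!
On the compact part `L` of the unit sphere where `xᵀPx ≥ 0` the hypothesis forces `‖Qx‖² > 0`, so the
ratio `xᵀPx / ‖Qx‖²` is continuous on `L` and bounded above by some `M`. Every `c > M` then makes
`xᵀPx - c‖Qx‖²` negative on the whole sphere, and homogeneity of degree two carries this to every
nonzero `x`.
-/

open scoped Matrix

theorem IsCompact.exists_pos_forall_sub_mul_neg {X : Type*} [TopologicalSpace X] {K : Set X}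
    (hK : IsCompact K) {f g : X → ℝ} (hf : Continuous f) (hg : Continuous g)
    (hg_nonneg : ∀ x ∈ K, 0 ≤ g x) (hfg : ∀ x ∈ K, g x = 0 → f x < 0) :
    ∃ cstar > (0 : ℝ), ∀ c > cstar, ∀ x ∈ K, f x - c * g x < 0 := by
  set L := K ∩ {x | 0 ≤ f x}
  have hL : IsCompact L := hK.inter_right (isClosed_le continuous_const hf)
  have hg_ne : ∀ x ∈ L, g x ≠ 0 := fun x hx hgx => (hfg x hx.1 hgx).not_ge hx.2
  obtain ⟨M, hM⟩ := hL.bddAbove_image (hf.continuousOn.div hg.continuousOn hg_ne)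
  refine ⟨max M 1, by positivity, fun c hc x hx => ?_⟩
  have hc_pos : 0 < c := (one_pos.trans_le (le_max_right M 1)).trans hc
  rcases lt_or_ge (f x) 0 with hfx | hfx
  · nlinarith [mul_nonneg hc_pos.le (hg_nonneg x hx)]
  · have hgx : 0 < g x := (hg_nonneg x hx).lt_of_ne' (hg_ne x ⟨hx, hfx⟩)
    have hquot : f x / g x ≤ M := hM ⟨x, ⟨hx, hfx⟩, rfl⟩
    have hcM : M < c := (le_max_left M 1).trans_lt hc
    nlinarith [(div_le_iff₀ hgx).1 hquot]

theorem exists_pos_forall_sub_mul_neg_of_homogeneous {E : Type*} [NormedAddCommGroup E]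
    [NormedSpace ℝ E] [FiniteDimensional ℝ E] {f g : E → ℝ} (hf : Continuous f)
    (hg : Continuous g) (hf_smul : ∀ (t : ℝ) x, f (t • x) = t ^ 2 * f x)
    (hg_smul : ∀ (t : ℝ) x, g (t • x) = t ^ 2 * g x) (hg_nonneg : ∀ x, 0 ≤ g x)
    (hfg : ∀ x ≠ 0, g x = 0 → f x < 0) :
    ∃ cstar > (0 : ℝ), ∀ c > cstar, ∀ x ≠ 0, f x - c * g x < 0 := by
  obtain ⟨cstar, hcstar, hsphere⟩ := (isCompact_sphere (0 : E) 1).exists_pos_forall_sub_mul_neg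
    hf hg (fun x _ => hg_nonneg x)
    (fun x hx => hfg x (ne_zero_of_mem_unit_sphere ⟨x, hx⟩))
  refine ⟨cstar, hcstar, fun c hc x hx => ?_⟩
  set y := (‖x‖⁻¹ : ℝ) • x
  have hy : y ∈ Metric.sphere (0 : E) 1 := by
    simpa [y] using norm_smul_inv_norm (𝕜 := ℝ) hx
  have hxy : x = ‖x‖ • y := (smul_inv_smul₀ (norm_ne_zero_iff.2 hx) x).symm
  have hfx : f x = ‖x‖ ^ 2 * f y := by rw [← hf_smul, ← hxy]
  have hgx : g x = ‖x‖ ^ 2 * g y := by rw [← hg_smul, ← hxy]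
  have hnorm : 0 < ‖x‖ ^ 2 := by positivity
  calc f x - c * g x = ‖x‖ ^ 2 * (f y - c * g y) := by rw [hfx, hgx]; ring
    _ < 0 := mul_neg_of_pos_of_neg hnorm (hsphere c hc y hy)

namespace Matrix

variable {ι κ : Type*} [Fintype ι] [Fintype κ]

theorem continuous_dotProduct_mulVec_self (M : Matrix ι ι ℝ) :
    Continuous fun x : ι → ℝ => x ⬝ᵥ M *ᵥ x := by
  fun_prop

theorem smul_dotProduct_mulVec_smul {R : Type*} [CommSemiring R] (M : Matrix ι ι R) (t : R)
    (x : ι → R) : (t • x) ⬝ᵥ M *ᵥ (t • x) = t ^ 2 * (x ⬝ᵥ M *ᵥ x) := by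
  rw [mulVec_smul, smul_dotProduct, dotProduct_smul, smul_eq_mul, smul_eq_mul]; ring

theorem dotProduct_transpose_mul_self_mulVec {R : Type*} [CommSemiring R] (Q : Matrix κ ι R)
    (x : ι → R) : x ⬝ᵥ (Qᵀ * Q) *ᵥ x = Q *ᵥ x ⬝ᵥ Q *ᵥ x := by
  rw [← mulVec_mulVec, dotProduct_mulVec, vecMul_transpose]

end Matrix

theorem debreu_lemma_general {n m : ℕ} (P : Matrix (Fin n) (Fin n) ℝ) (Q : Matrix (Fin m) (Fin n) ℝ)
    (h : ∀ x : Fin n → ℝ, x ≠ 0 → Q.mulVec x = 0 → x ⬝ᵥ P.mulVec x < 0) :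
    ∃ cstar > (0 : ℝ), ∀ c > cstar, ∀ x : Fin n → ℝ, x ≠ 0 →
      x ⬝ᵥ (P - c • (Qᵀ * Q)).mulVec x < 0 := by
  have hpenalty_nonneg : ∀ x : Fin n → ℝ, 0 ≤ x ⬝ᵥ (Qᵀ * Q) *ᵥ x := fun x => by
    simpa [Matrix.dotProduct_transpose_mul_self_mulVec] using
      dotProduct_star_self_nonneg (Q *ᵥ x)
  have hpenalty_zero : ∀ x : Fin n → ℝ, x ⬝ᵥ (Qᵀ * Q) *ᵥ x = 0 → Q *ᵥ x = 0 := fun x hx =>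
    dotProduct_self_eq_zero.1 (by rwa [← Matrix.dotProduct_transpose_mul_self_mulVec])
  obtain ⟨cstar, hcstar, hneg⟩ := exists_pos_forall_sub_mul_neg_of_homogeneous
    P.continuous_dotProduct_mulVec_self (Qᵀ * Q).continuous_dotProduct_mulVec_self
    P.smul_dotProduct_mulVec_smul (Qᵀ * Q).smul_dotProduct_mulVec_smul hpenalty_nonneg
    (fun x hx h0 => h x hx (hpenalty_zero x h0))
  refine ⟨cstar, hcstar, fun c hc x hx => ?_⟩
  rw [Matrix.sub_mulVec, dotProduct_sub, Matrix.smul_mulVec, dotProduct_smul, smul_eq_mul]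
  exact hneg c hc x hx

theorem debreu_lemma {n m : ℕ} (P : Matrix (Fin n) (Fin n) ℝ) (Q : Matrix (Fin m) (Fin n) ℝ)
    (hP : P.IsSymm)
    (h : ∀ x : Fin n → ℝ, x ≠ 0 → Q.mulVec x = 0 → x ⬝ᵥ P.mulVec x < 0) :
    ∃ cstar > (0 : ℝ), ∀ c > cstar, ∀ x : Fin n → ℝ, x ≠ 0 →
      x ⬝ᵥ (P - c • (Qᵀ * Q)).mulVec x < 0 :=
  debreu_lemma_general P Q h
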